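/- The maximal trading volume over all matching sets between B and A equals the minimum over all prices of the sum of supply and demand: sSup { n : ℕ | ∃ M, M is a matching set between B and A ∧ n = M.card } = sInf { n : ℕ | ∃ p : ℝ, n = S(p) + D(p) }. (Combination of the paper's Lemma 4 and Theorem 1: Q_MV = min_p (S(p) + D(p)) is exactly the maximal achievable trading volume.) -/

import Mathlib

def IsMatchingSet {β α : Type*} [DecidableEq β] [DecidableEq α]
    (B : Finset β) (A : Finset α) (pb : β → ℝ) (pa : α → ℝ)
    (M : Finset (β × α)) : Prop :=
  (∀ x ∈ M, x.1 ∈ B ∧ x.2 ∈ A ∧ pa x.2 ≤ pb x.1) ∧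
  (∀ x ∈ M, ∀ y ∈ M, (x.1 = y.1 → x.2 = y.2) ∧ (x.2 = y.2 → x.1 = y.1))

/-- If a list is sorted (ascending) w.r.t. `f` and `p < f l[j]`, then at most `j` elements
of the corresponding finset satisfy `f a ≤ p`. -/
lemma filter_card_le_of_sorted {γ : Type*} [DecidableEq γ] (C : Finset γ) (f : γ → ℝ)
    (l : List γ) (hperm : l.Perm C.toList)
    (hsort : l.Pairwise (fun x y => f x ≤ f y))
    (j : ℕ) (hj : j < l.length) (p : ℝ) (hp : p < f (l[j])) :
    (C.filter (fun a => f a ≤ p)).card ≤ j := by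
  classical
  have h1 : (C.filter (fun a => f a ≤ p)).card = l.countP (fun a => decide (f a ≤ p)) := by
    rw [Finset.card, Finset.filter_val, ← Multiset.countP_eq_card_filter,
      ← Finset.coe_toList C, Multiset.coe_countP]
    exact (hperm.countP_eq _).symm
  rw [h1]
  have hd : (l.drop j).countP (fun a => decide (f a ≤ p)) = 0 := by
    rw [List.countP_eq_zero]
    intro x hx
    obtain ⟨i, hi, rfl⟩ := List.mem_iff_getElem.1 hx
    rw [List.getElem_drop]
    simp only [decide_eq_true_eq, not_le]
    refine lt_of_lt_of_le hp ?_
    rcases Nat.eq_zero_or_pos i with h0 | h0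
    · subst h0; simp
    · exact List.pairwise_iff_getElem.1 hsort j (j + i) hj
        (by rw [List.length_drop] at hi; omega) (by omega)
  calc l.countP (fun a => decide (f a ≤ p))
      = (l.take j).countP (fun a => decide (f a ≤ p)) +
        (l.drop j).countP (fun a => decide (f a ≤ p)) := by
        rw [← List.countP_append, List.take_append_drop]
    _ ≤ j := by
        rw [hd, Nat.add_zero]
        exact le_trans List.countP_le_length (by simp)

/-- Any matching set has cardinality at most supply plus demand, at any price. -/
lemma matching_card_le {β α : Type*} [DecidableEq β] [DecidableEq α]
    (B : Finset β) (A : Finset α) (pb : β → ℝ) (pa : α → ℝ)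
    (M : Finset (β × α)) (hM : IsMatchingSet B A pb pa M) (p : ℝ) :
    M.card ≤ (A.filter (fun a => pa a ≤ p)).card + (B.filter (fun b => p ≤ pb b)).card := by
  classical
  rw [← Finset.card_disjSum]
  refine Finset.card_le_card_of_injOn
    (fun x => if pa x.2 ≤ p then Sum.inl x.2 else Sum.inr x.1) ?_ ?_
  · intro x hx
    obtain ⟨hb, ha, hle⟩ := hM.1 x hx
    by_cases h : pa x.2 ≤ p
    · simp only [h, if_pos]
      exact Finset.inl_mem_disjSum.2 (Finset.mem_filter.2 ⟨ha, h⟩)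
    · simp only [h, if_neg, not_false_iff]
      exact Finset.inr_mem_disjSum.2
        (Finset.mem_filter.2 ⟨hb, le_trans (le_of_lt (not_le.1 h)) hle⟩)
  · intro x hx y hy hxy
    simp only [Finset.mem_coe] at hx hy
    by_cases h1 : pa x.2 ≤ p <;> by_cases h2 : pa y.2 ≤ p <;>
      simp only [h1, h2, if_pos, if_neg, not_false_iff, Sum.inl.injEq, Sum.inr.injEq,
        reduceCtorEq] at hxy
    · exact Prod.ext ((hM.2 x hx y hy).2 hxy) hxy
    · exact Prod.ext hxy ((hM.2 x hx y hy).1 hxy)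

theorem max_volume_eq_min_supply_add_demand {β α : Type*} [DecidableEq β] [DecidableEq α]
    (B : Finset β) (A : Finset α) (pb : β → ℝ) (pa : α → ℝ) :
    sSup { n : ℕ | ∃ M : Finset (β × α), IsMatchingSet B A pb pa M ∧ n = M.card } =
      sInf { n : ℕ | ∃ p : ℝ,
        n = (A.filter (fun a => pa a ≤ p)).card + (B.filter (fun b => p ≤ pb b)).card } := by
  classical
  set Sset := { n : ℕ | ∃ M : Finset (β × α), IsMatchingSet B A pb pa M ∧ n = M.card }
    with hSdef
  set Tset := { n : ℕ | ∃ p : ℝ,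
      n = (A.filter (fun a => pa a ≤ p)).card + (B.filter (fun b => p ≤ pb b)).card }
    with hTdef
  have hS0 : (0 : ℕ) ∈ Sset := ⟨∅, ⟨by simp, by simp⟩, by simp⟩
  have hbdd : BddAbove Sset := by
    refine ⟨B.card, ?_⟩
    rintro n ⟨M, hM, rfl⟩
    have hinj : Set.InjOn Prod.fst (M : Set (β × α)) := by
      intro x hx y hy hxy
      exact Prod.ext hxy ((hM.2 x hx y hy).1 hxy)
    calc M.card = (M.image Prod.fst).card := (Finset.card_image_of_injOn hinj).symm
      _ ≤ B.card := Finset.card_le_card (by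
          intro b hb
          obtain ⟨x, hx, rfl⟩ := Finset.mem_image.1 hb
          exact (hM.1 x hx).1)
  have hT0 : Tset.Nonempty := ⟨_, 0, rfl⟩
  have h1 : sSup Sset ≤ sInf Tset := by
    refine le_csInf hT0 ?_
    rintro n ⟨p, rfl⟩
    refine csSup_le ⟨0, hS0⟩ ?_
    rintro m ⟨M, hM, rfl⟩
    exact matching_card_le B A pb pa M hM p
  refine le_antisymm h1 ?_
  set k := sSup Sset with hk
  -- it suffices to exhibit a price with supply + demand ≤ k
  suffices h : ∃ p : ℝ,
      (A.filter (fun a => pa a ≤ p)).card + (B.filter (fun b => p ≤ pb b)).card ≤ k by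
    obtain ⟨p, hp⟩ := h
    exact le_trans (Nat.sInf_le ⟨p, rfl⟩) hp
  by_cases hA : A.card ≤ k
  · -- take p above all bid prices
    obtain ⟨c, hc⟩ := (B.image pb).bddAbove
    refine ⟨c + 1, ?_⟩
    have hD : (B.filter (fun b => c + 1 ≤ pb b)) = ∅ := by
      rw [Finset.filter_eq_empty_iff]
      intro b hb
      have : pb b ≤ c := hc (by exact_mod_cast Finset.mem_image_of_mem pb hb)
      push_neg
      linarith
    rw [hD]
    simpa using le_trans (Finset.card_filter_le A _) hA
  by_cases hB : B.card ≤ k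
  · -- take p below all ask prices
    obtain ⟨c, hc⟩ := (A.image pa).bddBelow
    refine ⟨c - 1, ?_⟩
    have hS : (A.filter (fun a => pa a ≤ c - 1)) = ∅ := by
      rw [Finset.filter_eq_empty_iff]
      intro a ha
      have : c ≤ pa a := hc (by exact_mod_cast Finset.mem_image_of_mem pa ha)
      push_neg
      linarith
    rw [hS]
    simpa using le_trans (Finset.card_filter_le B _) hB
  push_neg at hA hB
  -- sorted lists of asks (ascending) and bids (descending)
  set la := A.toList.mergeSort (fun x y => decide (pa x ≤ pa y)) with hla
  set lb := B.toList.mergeSort (fun x y => decide (pb y ≤ pb x)) with hlb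
  have hpermA : la.Perm A.toList := List.mergeSort_perm _ _
  have hpermB : lb.Perm B.toList := List.mergeSort_perm _ _
  have hlenA : la.length = A.card := by rw [hpermA.length_eq, Finset.length_toList]
  have hlenB : lb.length = B.card := by rw [hpermB.length_eq, Finset.length_toList]
  have hndA : la.Nodup := hpermA.nodup_iff.2 A.nodup_toList
  have hndB : lb.Nodup := hpermB.nodup_iff.2 B.nodup_toList
  have hsortA : la.Pairwise (fun x y => pa x ≤ pa y) := by
    have := List.pairwise_mergeSort (le := fun x y => decide (pa x ≤ pa y))
      (fun a b c => by simpa using le_trans) (fun a b => by simpa using le_total _ _)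
      A.toList
    exact this.imp (by simp)
  have hsortB : lb.Pairwise (fun x y => pb y ≤ pb x) := by
    have := List.pairwise_mergeSort (le := fun x y => decide (pb y ≤ pb x))
      (fun a b c hab hbc => by simp at hab hbc ⊢; exact le_trans hbc hab)
      (fun a b => by simpa using le_total _ _) B.toList
    exact this.imp (by simp)
  have hkA : k + 1 ≤ la.length := by omega
  have hkB : k + 1 ≤ lb.length := by omega
  by_cases key : ∀ j (hj : j < k + 1),
      pa (la[j]'(by omega)) ≤ pb (lb[k - j]'(by omega))
  · -- build a matching of size k + 1, contradiction
    exfalso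
    set f : Fin (k + 1) → β × α := fun i =>
      (lb.get ⟨k - i.1, lt_of_le_of_lt (Nat.sub_le k i.1) (by omega)⟩,
       la.get ⟨i.1, lt_of_lt_of_le i.isLt hkA⟩) with hf
    have hinj : Function.Injective f := by
      intro i i' h
      rw [hf] at h
      simp only [Prod.mk.injEq, List.get_eq_getElem] at h
      exact Fin.ext ((hndA.getElem_inj_iff).1 h.2)
    set M := Finset.image f Finset.univ with hM
    have hcard : M.card = k + 1 := by
      rw [hM, Finset.card_image_of_injective _ hinj, Finset.card_univ, Fintype.card_fin]
    have hmem : ∀ x ∈ M, ∃ i : Fin (k + 1), x = f i := by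
      intro x hx
      rw [hM, Finset.mem_image] at hx
      obtain ⟨i, _, rfl⟩ := hx
      exact ⟨i, rfl⟩
    have hmatch : IsMatchingSet B A pb pa M := by
      constructor
      · intro x hx
        obtain ⟨i, rfl⟩ := hmem x hx
        refine ⟨?_, ?_, ?_⟩
        · exact Finset.mem_toList.1 (hpermB.mem_iff.1 (by rw [hf]; exact List.get_mem _ _))
        · exact Finset.mem_toList.1 (hpermA.mem_iff.1 (by rw [hf]; exact List.get_mem _ _))
        · have := key i.1 i.isLt
          simpa [hf, List.get_eq_getElem] using this
      · intro x hx y hy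
        obtain ⟨i, rfl⟩ := hmem x hx
        obtain ⟨i', rfl⟩ := hmem y hy
        constructor
        · intro h
          rw [hf] at h
          simp only [List.get_eq_getElem] at h
          have hkk : k - i.1 = k - i'.1 := (hndB.getElem_inj_iff).1 h
          have : i = i' := Fin.ext (by omega)
          rw [this]
        · intro h
          rw [hf] at h
          simp only [List.get_eq_getElem] at h
          have : i = i' := Fin.ext ((hndA.getElem_inj_iff).1 h)
          rw [this]
    have : k + 1 ≤ k := by
      rw [hk]
      exact le_csSup hbdd ⟨M, hmatch, hcard.symm⟩
    omega
  · push_neg at key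
    obtain ⟨j, hj, hgap⟩ := key
    set q := pa (la[j]'(by omega)) with hq
    set r := pb (lb[k - j]'(by omega)) with hr
    refine ⟨(r + q) / 2, ?_⟩
    have hrp : r < (r + q) / 2 := by
      rw [hr, hq]; linarith [hgap]
    have hpq : (r + q) / 2 < q := by
      rw [hr, hq]; linarith [hgap]
    have hSle : (A.filter (fun a => pa a ≤ (r + q) / 2)).card ≤ j :=
      filter_card_le_of_sorted A pa la hpermA hsortA j (by omega) _ hpq
    have hDle : (B.filter (fun b => (r + q) / 2 ≤ pb b)).card ≤ k - j := by
      have := filter_card_le_of_sorted B (fun b => -pb b) lb hpermB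
        (hsortB.imp (fun h => by simpa using h)) (k - j) (by omega)
        (-((r + q) / 2)) (by simpa using hrp)
      have heq : B.filter (fun b => -pb b ≤ -((r + q) / 2)) =
          B.filter (fun b => (r + q) / 2 ≤ pb b) := by
        apply Finset.filter_congr
        intro b _
        simp
      rwa [heq] at this
    omega
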